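/- arXiv:2602.01434 — 2 statements merged into one kernel-verified Lean document; each statement's English description precedes it below -/
import Mathlib

section
/- Let ℓ : ℝ × ℝ → ℝ be twice differentiable in its second argument with ℓ''(y, z) ≥ 0 for all y, z, and consider the two-layer network f_Θ(x) = (1/m) Σ_{j=1}^m a_j σ(θ_j^T x + b_j) with a_j ≥ 0, and the empirical risk Risk(Θ) = (1/n) Σ_{i=1}^n ℓ(y_i, f_Θ(x_i)). Write m∇²Risk(Θ) = H_diag(Θ) + H_cross(Θ) where H_cross(Θ) := (m/n) Σ_i ℓ''(y_i, f_Θ(x_i)) ∇f_Θ(x_i) ∇f_Θ(x_i)^T and H_diag(Θ) is the block-diagonal second-order part. Then: (i) λ_min(H_diag(Θ)) ≤ λ_min(m∇²Risk(Θ)); (ii) λ_min(m∇²Risk(Θ)) ≤ λ_min(H_diag(Θ)) + (C/m) ‖(1/n) Σ_i x_i x_i^T‖_op, where C depends only on the uniform bounds on ℓ'', a_j, σ'; and (iii) if ξ is a unit eigenvector of ∇²Risk(Θ) for its minimum eigenvalue, then ⟨ξ, H_diag(Θ) ξ⟩ ≤ λ_min(H_diag(Θ)) + (C/m) ‖(1/n)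 Σ_i x_i x_i^T‖_op. -/
open Matrix

/-- Euclidean dot product on `Fin d → ℝ`. -/
noncomputable def rdot {d : ℕ} (u v : Fin d → ℝ) : ℝ := ∑ p, u p * v p

/-- The two-layer network output `f_Θ(x) = (1/m) Σ_j a_j σ(θ_jᵀ x + b_j)`. -/
noncomputable def netOut (m d : ℕ) (a bv : Fin m → ℝ) (σ : ℝ → ℝ)
    (θ : Fin m → Fin d → ℝ) (xi : Fin d → ℝ) : ℝ :=
  (m : ℝ)⁻¹ * ∑ j, a j * σ (rdot (θ j) xi + bv j)

/-- The gradient `∇f_Θ(x) ∈ ℝ^{md}`, with blocks `(1/m) a_j σ'(θ_jᵀ x + b_j) x`. -/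
noncomputable def gradNet (m d : ℕ) (a bv : Fin m → ℝ) (σ' : ℝ → ℝ)
    (θ : Fin m → Fin d → ℝ) (xi : Fin d → ℝ) : Fin m × Fin d → ℝ :=
  fun jp => (m : ℝ)⁻¹ * a jp.1 * σ' (rdot (θ jp.1) xi + bv jp.1) * xi jp.2

/-- The cross (Gauss–Newton) part
`H_cross(Θ) = (m/n) Σ_i ℓ''(y_i, f_Θ(x_i)) ∇f_Θ(x_i) ∇f_Θ(x_i)ᵀ`. -/
noncomputable def Hcross (m d n : ℕ) (x : Fin n → Fin d → ℝ) (y : Fin n → ℝ)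
    (a bv : Fin m → ℝ) (σ σ' : ℝ → ℝ) (ℓ'' : ℝ → ℝ → ℝ) (θ : Fin m → Fin d → ℝ) :
    Matrix (Fin m × Fin d) (Fin m × Fin d) ℝ :=
  ((m : ℝ) / n) • ∑ i, ℓ'' (y i) (netOut m d a bv σ θ (x i)) •
    Matrix.vecMulVec (gradNet m d a bv σ' θ (x i)) (gradNet m d a bv σ' θ (x i))

/-- The block-diagonal second-order part `H_diag(Θ)`, whose `j`-th diagonal block is
`(m/n) Σ_i ℓ'(y_i, f_Θ(x_i)) (1/m) a_j σ''(θ_jᵀ x_i + b_j) x_i x_iᵀ`. -/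
noncomputable def Hdiag (m d n : ℕ) (x : Fin n → Fin d → ℝ) (y : Fin n → ℝ)
    (a bv : Fin m → ℝ) (σ σ'' : ℝ → ℝ) (ℓ' : ℝ → ℝ → ℝ) (θ : Fin m → Fin d → ℝ) :
    Matrix (Fin m × Fin d) (Fin m × Fin d) ℝ :=
  Matrix.of fun jp kq =>
    if jp.1 = kq.1 then
      ((m : ℝ) / n) * ∑ i, ℓ' (y i) (netOut m d a bv σ θ (x i)) *
        ((m : ℝ)⁻¹ * a jp.1 * σ'' (rdot (θ jp.1) (x i) + bv jp.1) * x i jp.2 * x i kq.2)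
    else 0

/-- Minimum of the Rayleigh quotient over unit vectors (equal to the minimum eigenvalue
for symmetric matrices). -/
noncomputable def lamMin {ι : Type*} [Fintype ι] (A : Matrix ι ι ℝ) : ℝ :=
  sInf {r : ℝ | ∃ v : ι → ℝ, (∑ i, v i ^ 2) = 1 ∧ r = v ⬝ᵥ A.mulVec v}

/-- Maximum of the Rayleigh quotient over unit vectors (equal to the operator norm for
positive semidefinite symmetric matrices, e.g. the sample covariance `(1/n) Σ x_i x_iᵀ`). -/
noncomputable def opRay {ι : Type*} [Fintype ι] (A : Matrix ι ι ℝ) : ℝ :=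
  sSup {r : ℝ | ∃ v : ι → ℝ, (∑ i, v i ^ 2) = 1 ∧ r = v ⬝ᵥ A.mulVec v}

/-!
Since `ℓ'' ≥ 0`, `H_cross` is a nonnegative combination of the rank-one matrices `∇f ∇fᵀ`, so
adding it can only raise Rayleigh quotients; this gives (i), and (iii) follows from (ii) because
`⟨ξ, H_diag ξ⟩ ≤ ⟨ξ, (H_diag + H_cross) ξ⟩ = λ_min` for the eigenvector `ξ`.

For (ii), block-diagonality splits `⟨v, H_diag v⟩ = Σ_j q_j` over the blocks `v_j` of `v`; as the
weights `t_j = ‖v_j‖²` sum to one, some block has `t_j ≠ 0` and `q_j ≤ t_j Σ_k q_k`, so the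
normalised restriction of `v` to that block is a unit test vector that does not increase
`⟨·, H_diag ·⟩`. On a vector supported on block `j`, each
gradient only contributes its block `(1/m) a_j σ'(θ_jᵀ x_i + b_j) x_i`, so the quadratic form of
`H_cross` is at most `(m/n) Σ_i Cb (Cb² / m)² ⟨x_i, u⟩² = (Cb⁵/m) ⟨u, (1/n) Σ_i x_i x_iᵀ u⟩`.
-/

section Rayleigh

variable {ι : Type*} [Fintype ι]

lemma abs_le_one_of_sum_sq_eq_one {v : ι → ℝ} (hv : ∑ i, v i ^ 2 = 1) (i : ι) : |v i| ≤ 1 := by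
  have h : v i ^ 2 ≤ 1 := hv ▸ Finset.single_le_sum (fun j _ => sq_nonneg (v j)) (Finset.mem_univ i)
  exact abs_le_one_iff_mul_self_le_one.mpr (by nlinarith)

lemma abs_dotProduct_mulVec_le (A : Matrix ι ι ℝ) {v : ι → ℝ} (hv : ∀ i, |v i| ≤ 1) :
    |v ⬝ᵥ A *ᵥ v| ≤ ∑ p, ∑ q, |A p q| := by
  calc |v ⬝ᵥ A *ᵥ v| = |∑ p, ∑ q, v p * A p q * v q| := by
        simp only [dotProduct, mulVec, Finset.mul_sum, mul_assoc]
    _ ≤ ∑ p, ∑ q, |v p * A p q * v q| :=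
        (Finset.abs_sum_le_sum_abs _ _).trans
          (Finset.sum_le_sum fun p _ => Finset.abs_sum_le_sum_abs _ _)
    _ ≤ ∑ p, ∑ q, |A p q| := by
        refine Finset.sum_le_sum fun p _ => Finset.sum_le_sum fun q _ => ?_
        rw [abs_mul, abs_mul]
        calc |v p| * |A p q| * |v q| ≤ 1 * |A p q| * 1 := by gcongr <;> exact hv _
          _ = |A p q| := by ring

lemma rayleigh_mem_Icc (A : Matrix ι ι ℝ) {v : ι → ℝ} (hv : ∑ i, v i ^ 2 = 1) :
    v ⬝ᵥ A *ᵥ v ∈ Set.Icc (-∑ p, ∑ q, |A p q|) (∑ p, ∑ q, |A p q|) :=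
  abs_le.mp (abs_dotProduct_mulVec_le A (abs_le_one_of_sum_sq_eq_one hv))

lemma lamMin_le (A : Matrix ι ι ℝ) {v : ι → ℝ} (hv : ∑ i, v i ^ 2 = 1) :
    lamMin A ≤ v ⬝ᵥ A *ᵥ v :=
  csInf_le ⟨_, by rintro r ⟨w, hw, rfl⟩; exact (rayleigh_mem_Icc A hw).1⟩ ⟨v, hv, rfl⟩

lemma le_opRay (A : Matrix ι ι ℝ) {v : ι → ℝ} (hv : ∑ i, v i ^ 2 = 1) :
    v ⬝ᵥ A *ᵥ v ≤ opRay A :=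
  le_csSup ⟨_, by rintro r ⟨w, hw, rfl⟩; exact (rayleigh_mem_Icc A hw).2⟩ ⟨v, hv, rfl⟩

lemma le_lamMin [Nonempty ι] (A : Matrix ι ι ℝ) {r : ℝ}
    (h : ∀ v : ι → ℝ, ∑ i, v i ^ 2 = 1 → r ≤ v ⬝ᵥ A *ᵥ v) : r ≤ lamMin A := by
  classical
  obtain ⟨i⟩ := ‹Nonempty ι›
  refine le_csInf ⟨_, Pi.single i 1, ?_, rfl⟩ (by rintro s ⟨v, hv, rfl⟩; exact h v hv)
  simp [Pi.single_apply, ite_pow]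

lemma lamMin_le_lamMin_add [Nonempty ι] (A : Matrix ι ι ℝ) {B : Matrix ι ι ℝ}
    (hB : ∀ v, 0 ≤ v ⬝ᵥ B *ᵥ v) : lamMin A ≤ lamMin (A + B) :=
  le_lamMin _ fun v hv => by
    rw [add_mulVec, dotProduct_add]
    linarith [lamMin_le A hv, hB v]

lemma dotProduct_mulVec_le_lamMin_add_of_eigenvector (A : Matrix ι ι ℝ) {B : Matrix ι ι ℝ}
    (hB : ∀ v, 0 ≤ v ⬝ᵥ B *ᵥ v) {ξ : ι → ℝ} (hξ : ∑ i, ξ i ^ 2 = 1)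
    (heig : (A + B) *ᵥ ξ = lamMin (A + B) • ξ) : ξ ⬝ᵥ A *ᵥ ξ ≤ lamMin (A + B) := by
  have hξξ : ξ ⬝ᵥ ξ = 1 := by simpa [dotProduct, sq] using hξ
  have hquad : ξ ⬝ᵥ (A + B) *ᵥ ξ = lamMin (A + B) := by
    rw [heig, dotProduct_smul, hξξ, smul_eq_mul, mul_one]
  rw [add_mulVec, dotProduct_add] at hquad
  linarith [hB ξ]

end Rayleigh

lemma exists_ne_zero_and_le_mul_sum {κ : Type*} [Fintype κ] {t q : κ → ℝ}
    (ht : ∑ j, t j = 1) (hq : ∀ j, t j = 0 → q j = 0) :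
    ∃ j, t j ≠ 0 ∧ q j ≤ t j * ∑ k, q k := by
  classical
  set s := Finset.univ.filter (fun j => t j ≠ 0)
  have hs : ∀ f : κ → ℝ, (∀ j, t j = 0 → f j = 0) → ∑ j ∈ s, f j = ∑ j, f j :=
    fun f hf => Finset.sum_filter_of_ne fun j _ hfj => mt (hf j) hfj
  have hne : s.Nonempty := by
    by_contra h
    rw [Finset.not_nonempty_iff_eq_empty] at h
    simp [← hs t (fun _ => id), h] at ht
  obtain ⟨j, hj, hle⟩ := Finset.exists_le_of_sum_le hne (f := q) (g := fun j => t j * ∑ k, q k)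
    (by rw [hs q hq, hs _ fun j hj => by simp [hj], ← Finset.sum_mul, ht, one_mul])
  exact ⟨j, (Finset.mem_filter.mp hj).2, hle⟩

section Block

variable {κ ι : Type*}

def IsBlockDiagonal (M : Matrix (κ × ι) (κ × ι) ℝ) : Prop :=
  ∀ j k p q, j ≠ k → M (j, p) (k, q) = 0

def blockVec [DecidableEq κ] (j : κ) (u : ι → ℝ) : κ × ι → ℝ :=
  Function.uncurry (Pi.single j u)

lemma blockVec_apply [DecidableEq κ] (j k : κ) (u : ι → ℝ) (p : ι) :
    blockVec j u (k, p) = if k = j then u p else 0 := by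
  by_cases h : k = j
  · subst h; simp [blockVec]
  · simp [blockVec, h]

variable [Fintype κ] [Fintype ι]

lemma IsBlockDiagonal.dotProduct_mulVec {M : Matrix (κ × ι) (κ × ι) ℝ} (hM : IsBlockDiagonal M)
    (v : κ × ι → ℝ) :
    v ⬝ᵥ M *ᵥ v = ∑ j, v.curry j ⬝ᵥ (M.submatrix (j, ·) (j, ·)) *ᵥ v.curry j := by
  simp only [dotProduct, mulVec, Fintype.sum_prod_type, submatrix_apply, Function.curry_apply]
  refine Finset.sum_congr rfl fun j _ => Finset.sum_congr rfl fun p _ => congrArg _ ?_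
  refine Finset.sum_eq_single j (fun k _ hk => Finset.sum_eq_zero fun q _ => ?_) (by simp)
  rw [hM j k p q (Ne.symm hk), zero_mul]

variable [DecidableEq κ]

lemma sum_sq_blockVec (j : κ) (u : ι → ℝ) : ∑ jp, blockVec j u jp ^ 2 = ∑ p, u p ^ 2 := by
  simp [Fintype.sum_prod_type, blockVec_apply, ite_pow]

lemma dotProduct_blockVec (w : κ × ι → ℝ) (j : κ) (u : ι → ℝ) :
    w ⬝ᵥ blockVec j u = w.curry j ⬝ᵥ u := by
  simp [dotProduct, Fintype.sum_prod_type, blockVec_apply]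

lemma blockVec_dotProduct_mulVec (M : Matrix (κ × ι) (κ × ι) ℝ) (j : κ) (u : ι → ℝ) :
    blockVec j u ⬝ᵥ M *ᵥ blockVec j u = u ⬝ᵥ (M.submatrix (j, ·) (j, ·)) *ᵥ u := by
  simp [dotProduct, mulVec, Fintype.sum_prod_type, blockVec_apply]

lemma IsBlockDiagonal.exists_blockVec_le {M : Matrix (κ × ι) (κ × ι) ℝ} (hM : IsBlockDiagonal M)
    {v : κ × ι → ℝ} (hv : ∑ jp, v jp ^ 2 = 1) :
    ∃ j u, ∑ p, u p ^ 2 = 1 ∧ blockVec j u ⬝ᵥ M *ᵥ blockVec j u ≤ v ⬝ᵥ M *ᵥ v := by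
  set w : κ → ι → ℝ := v.curry
  set t : κ → ℝ := fun j => ∑ p, w j p ^ 2
  set q : κ → ℝ := fun j => w j ⬝ᵥ (M.submatrix (j, ·) (j, ·)) *ᵥ w j
  have ht : ∑ j, t j = 1 := by rw [← hv, Fintype.sum_prod_type]; rfl
  have hq : ∀ j, t j = 0 → q j = 0 := fun j hj => by
    have hw : w j = 0 := funext fun p => pow_eq_zero_iff two_ne_zero |>.mp <|
      (Finset.sum_eq_zero_iff_of_nonneg fun p _ => sq_nonneg (w j p)).mp hj p (Finset.mem_univ p)
    simp [q, hw]
  obtain ⟨j, htj, hle⟩ := exists_ne_zero_and_le_mul_sum ht hq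
  have htj_pos : 0 < t j := lt_of_le_of_ne (Finset.sum_nonneg fun p _ => sq_nonneg _) htj.symm
  refine ⟨j, (√(t j))⁻¹ • w j, ?_, ?_⟩
  · simp only [Pi.smul_apply, smul_eq_mul, mul_pow, ← Finset.mul_sum, inv_pow,
      Real.sq_sqrt htj_pos.le]
    exact inv_mul_cancel₀ htj
  · rw [blockVec_dotProduct_mulVec, mulVec_smul, dotProduct_smul, smul_dotProduct, smul_eq_mul,
      smul_eq_mul, ← mul_assoc, ← sq, inv_pow, Real.sq_sqrt htj_pos.le, inv_mul_le_iff₀ htj_pos,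
      hM.dotProduct_mulVec v]
    exact hle

lemma IsBlockDiagonal.lamMin_add_le [Nonempty (κ × ι)] {A B : Matrix (κ × ι) (κ × ι) ℝ}
    (hA : IsBlockDiagonal A) {K : ℝ}
    (hB : ∀ j u, ∑ p, u p ^ 2 = 1 → blockVec j u ⬝ᵥ B *ᵥ blockVec j u ≤ K) :
    lamMin (A + B) ≤ lamMin A + K := by
  suffices lamMin (A + B) - K ≤ lamMin A by linarith
  refine le_lamMin A fun v hv => ?_
  obtain ⟨j, u, hu, hle⟩ := hA.exists_blockVec_le hv
  have hmin := lamMin_le (A + B) ((sum_sq_blockVec j u).trans hu)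
  rw [add_mulVec, dotProduct_add] at hmin
  linarith [hB j u hu]

end Block

lemma dotProduct_sum_smul_vecMulVec_mulVec {κ ι : Type*} [Fintype κ] [Fintype ι]
    (c : κ → ℝ) (g : κ → ι → ℝ) (v : ι → ℝ) :
    v ⬝ᵥ (∑ i, c i • vecMulVec (g i) (g i)) *ᵥ v = ∑ i, c i * (g i ⬝ᵥ v) ^ 2 := by
  rw [sum_mulVec, dotProduct_sum]
  refine Finset.sum_congr rfl fun i _ => ?_
  rw [smul_mulVec, dotProduct_smul, vecMulVec_mulVec, op_smul_eq_smul, dotProduct_smul,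
    dotProduct_comm, smul_eq_mul, smul_eq_mul, sq]

section Network

variable {m d n : ℕ} {x : Fin n → Fin d → ℝ} {y : Fin n → ℝ} {θ : Fin m → Fin d → ℝ}
  {a bv : Fin m → ℝ} {σ σ' σ'' : ℝ → ℝ} {ℓ' ℓ'' : ℝ → ℝ → ℝ}

lemma isBlockDiagonal_Hdiag : IsBlockDiagonal (Hdiag m d n x y a bv σ σ'' ℓ' θ) :=
  fun _ _ _ _ h => by simp [Hdiag, h]

lemma dotProduct_Hcross_mulVec (v : Fin m × Fin d → ℝ) :
    v ⬝ᵥ Hcross m d n x y a bv σ σ' ℓ'' θ *ᵥ v = (m / n : ℝ) * ∑ i,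
      ℓ'' (y i) (netOut m d a bv σ θ (x i)) * (gradNet m d a bv σ' θ (x i) ⬝ᵥ v) ^ 2 := by
  rw [Hcross, smul_mulVec, dotProduct_smul, dotProduct_sum_smul_vecMulVec_mulVec, smul_eq_mul]

lemma dotProduct_Hcross_mulVec_nonneg (hℓ'' : ∀ u v, 0 ≤ ℓ'' u v) (v : Fin m × Fin d → ℝ) :
    0 ≤ v ⬝ᵥ Hcross m d n x y a bv σ σ' ℓ'' θ *ᵥ v := by
  rw [dotProduct_Hcross_mulVec]
  exact mul_nonneg (by positivity)
    (Finset.sum_nonneg fun i _ => mul_nonneg (hℓ'' _ _) (sq_nonneg _))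

lemma gradNet_dotProduct_blockVec (xi : Fin d → ℝ) (j : Fin m) (u : Fin d → ℝ) :
    gradNet m d a bv σ' θ xi ⬝ᵥ blockVec j u =
      (m : ℝ)⁻¹ * a j * σ' (rdot (θ j) xi + bv j) * (xi ⬝ᵥ u) := by
  rw [dotProduct_blockVec]
  simp [gradNet, dotProduct, Finset.mul_sum, mul_assoc]

lemma dotProduct_covariance_mulVec (u : Fin d → ℝ) :
    u ⬝ᵥ ((n : ℝ)⁻¹ • ∑ i, vecMulVec (x i) (x i)) *ᵥ u = (n : ℝ)⁻¹ * ∑ i, (x i ⬝ᵥ u) ^ 2 := by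
  rw [Finset.smul_sum, dotProduct_sum_smul_vecMulVec_mulVec, Finset.mul_sum]

lemma blockVec_dotProduct_Hcross_mulVec_le {Cb : ℝ} (hCb : 0 ≤ Cb) (ha₀ : ∀ j, 0 ≤ a j)
    (ha : ∀ j, a j ≤ Cb) (hσ' : ∀ u, |σ' u| ≤ Cb)
    (hℓ'' : ∀ u v, ℓ'' u v ≤ Cb) (j : Fin m) {u : Fin d → ℝ} (hu : ∑ p, u p ^ 2 = 1) :
    blockVec j u ⬝ᵥ Hcross m d n x y a bv σ σ' ℓ'' θ *ᵥ blockVec j u ≤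
      Cb ^ 5 / m * opRay ((n : ℝ)⁻¹ • ∑ i, vecMulVec (x i) (x i)) := by
  have hterm : ∀ i, ℓ'' (y i) (netOut m d a bv σ θ (x i)) *
      ((m : ℝ)⁻¹ * a j * σ' (rdot (θ j) (x i) + bv j)) ^ 2 ≤ Cb * ((m : ℝ)⁻¹ * Cb * Cb) ^ 2 := by
    intro i
    have hgrad : ((m : ℝ)⁻¹ * a j * σ' (rdot (θ j) (x i) + bv j)) ^ 2 ≤
        ((m : ℝ)⁻¹ * Cb * Cb) ^ 2 := by
      rw [← sq_abs, abs_mul, abs_mul, abs_of_nonneg (ha₀ j), abs_inv, Nat.abs_cast]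
      gcongr
      · exact mul_nonneg (mul_nonneg (by positivity) (ha₀ j)) (abs_nonneg _)
      · exact ha j
      · exact hσ' _
    exact mul_le_mul (hℓ'' _ _) hgrad (sq_nonneg _) hCb
  calc blockVec j u ⬝ᵥ Hcross m d n x y a bv σ σ' ℓ'' θ *ᵥ blockVec j u
      = (m / n : ℝ) * ∑ i, ℓ'' (y i) (netOut m d a bv σ θ (x i)) *
          ((m : ℝ)⁻¹ * a j * σ' (rdot (θ j) (x i) + bv j)) ^ 2 * (x i ⬝ᵥ u) ^ 2 := by
        simp only [dotProduct_Hcross_mulVec, gradNet_dotProduct_blockVec, mul_pow, mul_assoc]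
    _ ≤ (m / n : ℝ) * ∑ i, Cb * ((m : ℝ)⁻¹ * Cb * Cb) ^ 2 * (x i ⬝ᵥ u) ^ 2 := by
        gcongr _ * ∑ i, ?_ * _ with i
        exact hterm i
    _ = Cb ^ 5 / m * (u ⬝ᵥ ((n : ℝ)⁻¹ • ∑ i, vecMulVec (x i) (x i)) *ᵥ u) := by
        rw [dotProduct_covariance_mulVec, ← Finset.mul_sum]
        field_simp
    _ ≤ Cb ^ 5 / m * opRay ((n : ℝ)⁻¹ • ∑ i, vecMulVec (x i) (x i)) := by
        gcongr
        exact le_opRay _ hu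

end Network

/-- The eigenvalue sandwich for the Hessian of the empirical risk: writing
`m∇²Risk(Θ) = H_diag(Θ) + H_cross(Θ)`, with `ℓ'' ≥ 0` and `a_j ≥ 0`,
(i) `λ_min(H_diag) ≤ λ_min(m∇²Risk)`,
(ii) `λ_min(m∇²Risk) ≤ λ_min(H_diag) + (C/m) ‖(1/n) Σ_i x_i x_iᵀ‖_op`,
(iii) for a unit eigenvector `ξ` of the minimum eigenvalue of the Hessian,
`⟨ξ, H_diag ξ⟩ ≤ λ_min(H_diag) + (C/m) ‖(1/n) Σ_i x_i x_iᵀ‖_op`,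
where `C` depends only on the uniform bounds `Cb` on `ℓ''`, `a_j`, `σ'`. -/
theorem stmt5 (Cb : ℝ) (hCb : 0 ≤ Cb) :
    ∃ C : ℝ, 0 ≤ C ∧
      ∀ (m d n : ℕ), 0 < m → 0 < n → 0 < d →
      ∀ (x : Fin n → Fin d → ℝ) (y : Fin n → ℝ) (θ : Fin m → Fin d → ℝ)
        (a bv : Fin m → ℝ) (σ σ' σ'' : ℝ → ℝ) (ℓ' ℓ'' : ℝ → ℝ → ℝ),
        (∀ j, 0 ≤ a j) → (∀ j, a j ≤ Cb) → (∀ u, |σ' u| ≤ Cb) →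
        (∀ u v, 0 ≤ ℓ'' u v) → (∀ u v, ℓ'' u v ≤ Cb) →
        lamMin (Hdiag m d n x y a bv σ σ'' ℓ' θ) ≤
            lamMin (Hdiag m d n x y a bv σ σ'' ℓ' θ + Hcross m d n x y a bv σ σ' ℓ'' θ) ∧
        lamMin (Hdiag m d n x y a bv σ σ'' ℓ' θ + Hcross m d n x y a bv σ σ' ℓ'' θ) ≤
            lamMin (Hdiag m d n x y a bv σ σ'' ℓ' θ) +
              (C / m) * opRay ((n : ℝ)⁻¹ • ∑ i, Matrix.vecMulVec (x i) (x i)) ∧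
        ∀ ξ : Fin m × Fin d → ℝ, (∑ jp, ξ jp ^ 2) = 1 →
          (Hdiag m d n x y a bv σ σ'' ℓ' θ + Hcross m d n x y a bv σ σ' ℓ'' θ).mulVec ξ =
            lamMin (Hdiag m d n x y a bv σ σ'' ℓ' θ + Hcross m d n x y a bv σ σ' ℓ'' θ) • ξ →
          ξ ⬝ᵥ (Hdiag m d n x y a bv σ σ'' ℓ' θ).mulVec ξ ≤
            lamMin (Hdiag m d n x y a bv σ σ'' ℓ' θ) +
              (C / m) * opRay ((n : ℝ)⁻¹ • ∑ i, Matrix.vecMulVec (x i) (x i)) := by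
  refine ⟨Cb ^ 5, by positivity,
    fun m d n hm _ hd x y θ a bv σ σ' σ'' ℓ' ℓ'' ha₀ ha hσ' hℓ''₀ hℓ'' => ?_⟩
  have : Nonempty (Fin m × Fin d) := ⟨(⟨0, hm⟩, ⟨0, hd⟩)⟩
  set Hd := Hdiag m d n x y a bv σ σ'' ℓ' θ
  set Hc := Hcross m d n x y a bv σ σ' ℓ'' θ
  set S := (n : ℝ)⁻¹ • ∑ i, vecMulVec (x i) (x i)
  have hcross : ∀ v, 0 ≤ v ⬝ᵥ Hc *ᵥ v := dotProduct_Hcross_mulVec_nonneg hℓ''₀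
  have hii : lamMin (Hd + Hc) ≤ lamMin Hd + Cb ^ 5 / m * opRay S :=
    isBlockDiagonal_Hdiag.lamMin_add_le fun j _ hu =>
      blockVec_dotProduct_Hcross_mulVec_le hCb ha₀ ha hσ' hℓ'' j hu
  exact ⟨lamMin_le_lamMin_add Hd hcross, hii, fun ξ hξ heig =>
    (dotProduct_mulVec_le_lamMin_add_of_eigenvector Hd hcross hξ heig).trans hii⟩
end

section
/- Consider the collection of 'hard orthonormal sets' 𝒰_H of matrices U ∈ ℝ^{k×k′} with orthonormal columns such that E[𝒯(y, P_U^⊥ z, ξ) P_U z] = 0 for all measurable 𝒯 : ℝ^{k+2} → ℝ for which the expectation is defined, where z ∼ N(0, I_k), y = h(z, ε) with ε ∼ N(0,1) independent of z, ξ ∼ N(0,1) independent of everything, P_U = UU^T and P_U^⊥ = I − P_U. Then: (i) U ∈ 𝒰_H if and only if E[P_U z | y, P_U^⊥ z] = 0 almost surely; and (ii) if span(U_1) and span(U_2) are both spanned by hard orthonormal sets, then their sum span(U_1) + span(U_2) is also spanned by a hard orthonormal set. Consequently there is a unique maximal hard subspace. -/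
open Matrix MeasureTheory ProbabilityTheory

/-- Projection `P_U = UUᵀ` applied to a vector. -/
noncomputable def PU {k k' : ℕ} (U : Matrix (Fin k) (Fin k') ℝ) (v : Fin k → ℝ) :
    Fin k → ℝ :=
  (U * Uᵀ).mulVec v

/-- Complementary projection `P_U^⊥ = I − UUᵀ` applied to a vector. -/
noncomputable def PUperp {k k' : ℕ} (U : Matrix (Fin k) (Fin k') ℝ) (v : Fin k → ℝ) :
    Fin k → ℝ :=
  v - PU U v

/-- `U` is a hard orthonormal set: its columns are orthonormal and
`E[𝒯(y, P_U^⊥ z, ξ) P_U z] = 0` for every measurable `𝒯` for which the expectation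
is defined. -/
def IsHardFrame {k : ℕ} (Ω : Type*) [MeasurableSpace Ω] (P : Measure Ω)
    (z : Ω → Fin k → ℝ) (y : Ω → ℝ) (ξ : Ω → ℝ)
    {k' : ℕ} (U : Matrix (Fin k) (Fin k') ℝ) : Prop :=
  Uᵀ * U = 1 ∧
  ∀ T : ℝ → (Fin k → ℝ) → ℝ → ℝ,
    Measurable (fun p : ℝ × (Fin k → ℝ) × ℝ => T p.1 p.2.1 p.2.2) →
    (∀ j, Integrable (fun ω => T (y ω) (PUperp U (z ω)) (ξ ω) * PU U (z ω) j) P) →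
    ∀ j, ∫ ω, T (y ω) (PUperp U (z ω)) (ξ ω) * PU U (z ω) j ∂P = 0

/-- The column span of a matrix, inside `Fin k → ℝ`. -/
def colSpanR {k k' : ℕ} (U : Matrix (Fin k) (Fin k') ℝ) : Submodule ℝ (Fin k → ℝ) :=
  Submodule.span ℝ (Set.range fun c : Fin k' => fun i => U i c)

/-!
Testing the defining identity of a hard frame against indicators `𝒯 = 1_t(y, P_U^⊥ z)` says
that `P_U z` integrates to zero over every set of `σ(y, P_U^⊥ z)`, i.e. that
`E[P_U z | y, P_U^⊥ z] = 0`; conversely, given this, the independent argument `ξ` of `𝒯` is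
integrated out by Fubini and `𝒯(·, ·, ξ)` is pulled out of the conditional expectation.

For (ii), let `U₃` be an orthonormal frame of `span U₁ + span U₂`. Since
`P_{U₃}^⊥ = P_{U₃}^⊥ P_{Uᵢ}^⊥`, the σ-algebra `σ(y, P_{U₃}^⊥ z)` is contained in
`σ(y, P_{Uᵢ}^⊥ z)`, and every coordinate of `P_{U₃} z` is a linear combination of coordinates
of `P_{U₁} z` and `P_{U₂} z`; so its integral over any set of `σ(y, P_{U₃}^⊥ z)` vanishes.
The hard subspaces thus form a sup-closed family in a Noetherian lattice, which has a greatest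
element.
-/

section Frame

variable {k k' : ℕ}

lemma colSpanR_eq_range (U : Matrix (Fin k) (Fin k') ℝ) :
    colSpanR U = LinearMap.range U.mulVecLin := by
  rw [Matrix.range_mulVecLin, colSpanR]
  rfl

lemma PU_mem_colSpanR (U : Matrix (Fin k) (Fin k') ℝ) (v : Fin k → ℝ) :
    PU U v ∈ colSpanR U := by
  rw [colSpanR_eq_range, PU, ← Matrix.mulVec_mulVec]
  exact ⟨_, rfl⟩

lemma PU_eq_self_of_mem {U : Matrix (Fin k) (Fin k') ℝ} (hU : Uᵀ * U = 1) {v : Fin k → ℝ}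
    (hv : v ∈ colSpanR U) : PU U v = v := by
  rw [colSpanR_eq_range] at hv
  obtain ⟨w, rfl⟩ := hv
  rw [Matrix.mulVecLin_apply, PU, Matrix.mulVec_mulVec, Matrix.mul_assoc, hU, Matrix.mul_one]

lemma PUperp_eq_zero_of_mem {U : Matrix (Fin k) (Fin k') ℝ} (hU : Uᵀ * U = 1) {v : Fin k → ℝ}
    (hv : v ∈ colSpanR U) : PUperp U v = 0 := by
  rw [PUperp, PU_eq_self_of_mem hU hv, sub_self]

lemma PUperp_sub (U : Matrix (Fin k) (Fin k') ℝ) (v w : Fin k → ℝ) :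
    PUperp U (v - w) = PUperp U v - PUperp U w := by
  simp only [PUperp, PU, Matrix.mulVec_sub]
  abel

lemma PUperp_PUperp_of_le {k'' : ℕ} {U : Matrix (Fin k) (Fin k') ℝ}
    {U' : Matrix (Fin k) (Fin k'') ℝ} (hU : Uᵀ * U = 1) (hle : colSpanR U' ≤ colSpanR U)
    (v : Fin k → ℝ) : PUperp U (PUperp U' v) = PUperp U v := by
  rw [show PUperp U' v = v - PU U' v from rfl, PUperp_sub,
    PUperp_eq_zero_of_mem hU (hle (PU_mem_colSpanR U' v)), sub_zero]

lemma dotProduct_PU_comm (U : Matrix (Fin k) (Fin k') ℝ) (a v : Fin k → ℝ) :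
    a ⬝ᵥ PU U v = PU U a ⬝ᵥ v := by
  rw [PU, PU, Matrix.dotProduct_mulVec, ← Matrix.mulVec_transpose, Matrix.transpose_mul,
    Matrix.transpose_transpose]

lemma dotProduct_PU_of_mem {U : Matrix (Fin k) (Fin k') ℝ} (hU : Uᵀ * U = 1) {a : Fin k → ℝ}
    (ha : a ∈ colSpanR U) (v : Fin k → ℝ) : a ⬝ᵥ PU U v = a ⬝ᵥ v := by
  rw [dotProduct_PU_comm, PU_eq_self_of_mem hU ha]

lemma exists_PU_apply_eq_add {k₁ k₂ : ℕ} {U : Matrix (Fin k) (Fin k') ℝ}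
    {U₁ : Matrix (Fin k) (Fin k₁) ℝ} {U₂ : Matrix (Fin k) (Fin k₂) ℝ}
    (hU₁ : U₁ᵀ * U₁ = 1) (hU₂ : U₂ᵀ * U₂ = 1) (hle : colSpanR U ≤ colSpanR U₁ ⊔ colSpanR U₂)
    (j : Fin k) : ∃ a b : Fin k → ℝ, ∀ v, PU U v j = a ⬝ᵥ PU U₁ v + b ⬝ᵥ PU U₂ v := by
  obtain ⟨a, ha, b, hb, hab⟩ := Submodule.mem_sup.mp (hle (PU_mem_colSpanR U (Pi.single j 1)))
  refine ⟨a, b, fun v => ?_⟩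
  rw [dotProduct_PU_of_mem hU₁ ha, dotProduct_PU_of_mem hU₂ hb, ← add_dotProduct, hab,
    ← dotProduct_PU_comm, single_one_dotProduct]

lemma measurable_PU (U : Matrix (Fin k) (Fin k') ℝ) : Measurable (PU U) :=
  (U * Uᵀ).mulVecLin.continuous_of_finiteDimensional.measurable

lemma measurable_PUperp (U : Matrix (Fin k) (Fin k') ℝ) : Measurable (PUperp U) :=
  measurable_id.sub (measurable_PU U)

end Frame

lemma exists_orthonormal_colSpanR_eq {k : ℕ} (V : Submodule ℝ (Fin k → ℝ)) :
    ∃ (k' : ℕ) (U : Matrix (Fin k) (Fin k') ℝ), Uᵀ * U = 1 ∧ colSpanR U = V := by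
  let e := WithLp.linearEquiv 2 ℝ (Fin k → ℝ)
  let b := stdOrthonormalBasis ℝ (V.comap e.toLinearMap)
  let f := e.toLinearMap ∘ₗ (V.comap e.toLinearMap).subtype
  refine ⟨_, Matrix.of fun i c => f (b c) i, ?_, ?_⟩
  · ext c c'
    rw [Matrix.mul_apply, Matrix.one_apply, ← orthonormal_iff_ite.mp b.orthonormal c c',
      Submodule.coe_inner, PiLp.inner_apply]
    exact Finset.sum_congr rfl fun i _ => mul_comm _ _
  · have hrange : Set.range (fun c i => (Matrix.of fun i c => f (b c) i) i c) =
        f '' Set.range b := by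
      rw [← Set.range_comp]; rfl
    rw [colSpanR, hrange, Submodule.span_image, ← b.coe_toBasis, b.toBasis.span_eq,
      Submodule.map_top, LinearMap.range_comp, Submodule.range_subtype,
      Submodule.map_comap_eq_of_surjective e.surjective]

lemma integrable_of_map_eq_pi {Ω ι : Type*} [MeasurableSpace Ω] [Fintype ι] {P : Measure Ω}
    {z : Ω → ι → ℝ} {μ : ι → Measure ℝ} [∀ i, IsProbabilityMeasure (μ i)] (hz : Measurable z)
    (hlaw : P.map z = Measure.pi μ) (hμ : ∀ i, Integrable id (μ i)) : Integrable z P :=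
  Integrable.of_eval fun i => by
    have := integrable_eval (μ := μ) (hμ i)
    rw [← hlaw] at this
    exact this.comp_measurable hz

lemma integrable_dotProduct {Ω ι : Type*} [MeasurableSpace Ω] [Fintype ι] {μ : Measure Ω}
    {X : Ω → ι → ℝ} (hX : ∀ i, Integrable (fun ω => X ω i) μ) (a : ι → ℝ) :
    Integrable (fun ω => a ⬝ᵥ X ω) μ :=
  integrable_finsetSum _ fun i _ => (hX i).const_mul (a i)

lemma integral_dotProduct {Ω ι : Type*} [MeasurableSpace Ω] [Fintype ι] {μ : Measure Ω}
    {X : Ω → ι → ℝ} (hX : ∀ i, Integrable (fun ω => X ω i) μ) (a : ι → ℝ) :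
    ∫ ω, a ⬝ᵥ X ω ∂μ = a ⬝ᵥ fun i => ∫ ω, X ω i ∂μ := by
  simp only [dotProduct]
  rw [integral_finsetSum _ fun i _ => (hX i).const_mul _]
  simp only [integral_const_mul]

section CondExp

variable {Ω α β : Type*} [MeasurableSpace Ω] [MeasurableSpace α] [MeasurableSpace β]
  {P : Measure Ω} [IsFiniteMeasure P] {W : Ω → α} {X : Ω → ℝ}

lemma condExp_comap_ae_eq_zero_iff (hW : Measurable W) (hX : Integrable X P) :
    P[X | MeasurableSpace.comap W inferInstance] =ᵐ[P] 0 ↔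
      ∀ t, MeasurableSet t → ∫ ω in W ⁻¹' t, X ω ∂P = 0 := by
  have hm := hW.comap_le
  constructor
  · intro h t ht
    rw [← setIntegral_condExp hm hX ⟨t, ht, rfl⟩,
      setIntegral_congr_ae (hW ht) (h.mono fun _ h _ => h)]
    simp
  · intro H
    refine (ae_eq_condExp_of_forall_setIntegral_eq hm hX (fun _ _ _ => integrableOn_zero) ?_
      aestronglyMeasurable_const).symm
    rintro _ ⟨t, ht, rfl⟩ _
    simp [H t ht]

lemma integral_comp_mul_eq_zero_of_condExp_eq_zero (hW : Measurable W) (hX : Integrable X P)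
    (hce : P[X | MeasurableSpace.comap W inferInstance] =ᵐ[P] 0) {g : α → ℝ} (hg : Measurable g)
    (hint : Integrable (fun ω => g (W ω) * X ω) P) :
    ∫ ω, g (W ω) * X ω ∂P = 0 := by
  have hgW : StronglyMeasurable[MeasurableSpace.comap W inferInstance] (g ∘ W) :=
    (hg.comp (comap_measurable W)).stronglyMeasurable
  calc ∫ ω, g (W ω) * X ω ∂P
      = ∫ ω, P[(g ∘ W) * X | MeasurableSpace.comap W inferInstance] ω ∂P :=
        (integral_condExp hW.comap_le).symm
    _ = ∫ ω, (g ∘ W * P[X | MeasurableSpace.comap W inferInstance]) ω ∂P :=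
        integral_congr_ae (condExp_mul_of_stronglyMeasurable_left hgW hint hX)
    _ = 0 := by
        rw [integral_eq_zero_of_ae]
        filter_upwards [hce] with ω hω
        simp [hω]

lemma integral_comp_indep_mul_eq_zero {ξ : Ω → β} (hW : Measurable W) (hX : Measurable X)
    (hXint : Integrable X P) (hξ : Measurable ξ) (hind : IndepFun (fun ω => (W ω, X ω)) ξ P)
    (hce : P[X | MeasurableSpace.comap W inferInstance] =ᵐ[P] 0) {T : α → β → ℝ}
    (hT : Measurable (Function.uncurry T))
    (hint : Integrable (fun ω => T (W ω) (ξ ω) * X ω) P) :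
    ∫ ω, T (W ω) (ξ ω) * X ω ∂P = 0 := by
  have hWX : Measurable fun ω => (W ω, X ω) := hW.prodMk hX
  let G : (α × ℝ) × β → ℝ := fun q => T q.1.1 q.2 * q.1.2
  have hG : Measurable G :=
    (hT.comp (measurable_fst.fst.prodMk measurable_snd)).mul measurable_fst.snd
  have hmap := (indepFun_iff_map_prod_eq_prod_map_map hWX.aemeasurable hξ.aemeasurable).mp hind
  have hGint : Integrable G ((P.map fun ω => (W ω, X ω)).prod (P.map ξ)) := by
    rw [← hmap]
    exact (integrable_map_measure hG.aestronglyMeasurable (hWX.prodMk hξ).aemeasurable).mpr hint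
  calc ∫ ω, T (W ω) (ξ ω) * X ω ∂P
      = ∫ q, G q ∂((P.map fun ω => (W ω, X ω)).prod (P.map ξ)) := by
        rw [← hmap, integral_map (hWX.prodMk hξ).aemeasurable hG.aestronglyMeasurable]
    _ = ∫ b, ∫ p, G (p, b) ∂(P.map fun ω => (W ω, X ω)) ∂(P.map ξ) := integral_prod_symm G hGint
    _ = 0 := by
        refine integral_eq_zero_of_ae ?_
        filter_upwards [hGint.prod_left_ae] with b hb
        have hGb : Measurable fun p => G (p, b) := hG.comp (measurable_id.prodMk measurable_const)
        rw [integral_map hWX.aemeasurable hGb.aestronglyMeasurable]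
        exact integral_comp_mul_eq_zero_of_condExp_eq_zero hW hXint hce
          (hT.comp (measurable_id.prodMk measurable_const))
          ((integrable_map_measure hGb.aestronglyMeasurable hWX.aemeasurable).mp hb)

end CondExp

lemma SupClosed.exists_isGreatest {α : Type*} [SemilatticeSup α] [WellFoundedGT α] {s : Set α}
    (hs : SupClosed s) (hne : s.Nonempty) : ∃ a, IsGreatest s a := by
  obtain ⟨a, has, hmax⟩ := wellFounded_gt.has_min s hne
  refine ⟨a, has, fun b hb => ?_⟩
  by_contra hba
  exact hmax _ (hs has hb) (lt_of_le_of_ne le_sup_left fun h => hba (h ▸ le_sup_right))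

section HardFrame

variable {k : ℕ} {Ω : Type*} [MeasurableSpace Ω] {P : Measure Ω}
  {z : Ω → Fin k → ℝ} {y ξ : Ω → ℝ}

lemma integrable_PU_apply (hz : Integrable z P) {k' : ℕ} (U : Matrix (Fin k) (Fin k') ℝ)
    (j : Fin k) : Integrable (fun ω => PU U (z ω) j) P :=
  ((U * Uᵀ).mulVecLin.toContinuousLinearMap.integrable_comp hz).eval j

lemma measurable_pair_PUperp (hz : Measurable z) (hy : Measurable y) {k' : ℕ}
    (U : Matrix (Fin k) (Fin k') ℝ) : Measurable fun ω => (y ω, PUperp U (z ω)) :=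
  hy.prodMk ((measurable_PUperp U).comp hz)

lemma isHardFrame_empty (z : Ω → Fin k → ℝ) (y ξ : Ω → ℝ) :
    IsHardFrame Ω P z y ξ (0 : Matrix (Fin k) (Fin 0) ℝ) := by
  refine ⟨Subsingleton.elim _ _, fun T _ _ j => ?_⟩
  simp [PU]

lemma colSpanR_empty : colSpanR (0 : Matrix (Fin k) (Fin 0) ℝ) = ⊥ := by
  simp [colSpanR]

variable {k' : ℕ} {U : Matrix (Fin k) (Fin k') ℝ}

lemma IsHardFrame.setIntegral_eq_zero (hU : IsHardFrame Ω P z y ξ U) (hz : Measurable z)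
    (hzint : Integrable z P) (hy : Measurable y) {t : Set (ℝ × (Fin k → ℝ))}
    (ht : MeasurableSet t) (j : Fin k) :
    ∫ ω in (fun ω => (y ω, PUperp U (z ω))) ⁻¹' t, PU U (z ω) j ∂P = 0 := by
  have hW := measurable_pair_PUperp hz hy U
  let T : ℝ → (Fin k → ℝ) → ℝ → ℝ := fun a v _ => t.indicator 1 (a, v)
  have hT : Measurable fun p : ℝ × (Fin k → ℝ) × ℝ => T p.1 p.2.1 p.2.2 :=
    (measurable_one.indicator ht).comp (measurable_fst.prodMk measurable_snd.fst)
  have hTX : ∀ j, (fun ω => T (y ω) (PUperp U (z ω)) (ξ ω) * PU U (z ω) j) =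
      ((fun ω => (y ω, PUperp U (z ω))) ⁻¹' t).indicator fun ω => PU U (z ω) j :=
    fun j => funext fun ω => by
      by_cases hω : (y ω, PUperp U (z ω)) ∈ t <;> simp [T, hω]
  rw [← integral_indicator (hW ht), ← hTX]
  exact hU.2 T hT (fun j => hTX j ▸ (integrable_PU_apply hzint U j).indicator (hW ht)) j

/-- Since `P_U^⊥ = P_U^⊥ P_{U'}^⊥`, the pair `(y, P_U^⊥ z)` is a function of `(y, P_{U'}^⊥ z)`. -/
lemma IsHardFrame.setIntegral_eq_zero_of_le {k'' : ℕ} {U' : Matrix (Fin k) (Fin k'') ℝ}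
    (hU' : IsHardFrame Ω P z y ξ U') (hU : Uᵀ * U = 1) (hle : colSpanR U' ≤ colSpanR U)
    (hz : Measurable z) (hzint : Integrable z P) (hy : Measurable y)
    {t : Set (ℝ × (Fin k → ℝ))} (ht : MeasurableSet t) (l : Fin k) :
    ∫ ω in (fun ω => (y ω, PUperp U (z ω))) ⁻¹' t, PU U' (z ω) l ∂P = 0 := by
  have hφ : Measurable fun q : ℝ × (Fin k → ℝ) => (q.1, PUperp U q.2) :=
    measurable_fst.prodMk ((measurable_PUperp U).comp measurable_snd)
  have hpre : (fun ω => (y ω, PUperp U (z ω))) ⁻¹' t =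
      (fun ω => (y ω, PUperp U' (z ω))) ⁻¹' ((fun q => (q.1, PUperp U q.2)) ⁻¹' t) := by
    ext ω
    simp [PUperp_PUperp_of_le hU hle]
  rw [hpre]
  exact hU'.setIntegral_eq_zero hz hzint hy (hφ ht) l

variable [IsFiniteMeasure P]

lemma isHardFrame_of_condExp_eq_zero (hU : Uᵀ * U = 1) (hz : Measurable z)
    (hzint : Integrable z P) (hy : Measurable y) (hξ : Measurable ξ)
    (hind : IndepFun (fun ω => (y ω, z ω)) ξ P)
    (hce : ∀ j, P[(fun ω => PU U (z ω) j) |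
      MeasurableSpace.comap (fun ω => (y ω, PUperp U (z ω))) inferInstance] =ᵐ[P] 0) :
    IsHardFrame Ω P z y ξ U := by
  refine ⟨hU, fun T hT hTint j => ?_⟩
  have hφ : Measurable fun p : ℝ × (Fin k → ℝ) => ((p.1, PUperp U p.2), PU U p.2 j) :=
    (measurable_fst.prodMk ((measurable_PUperp U).comp measurable_snd)).prodMk
      ((measurable_PU U).comp measurable_snd).eval
  exact integral_comp_indep_mul_eq_zero (measurable_pair_PUperp hz hy U)
    ((measurable_PU U).comp hz).eval (integrable_PU_apply hzint U j) hξ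
    (hind.comp hφ measurable_id) (hce j) (T := fun p r => T p.1 p.2 r)
    (hT.comp (measurable_fst.fst.prodMk (measurable_fst.snd.prodMk measurable_snd))) (hTint j)

theorem isHardFrame_iff_condExp_eq_zero (hU : Uᵀ * U = 1) (hz : Measurable z)
    (hzint : Integrable z P) (hy : Measurable y) (hξ : Measurable ξ)
    (hind : IndepFun (fun ω => (y ω, z ω)) ξ P) :
    IsHardFrame Ω P z y ξ U ↔ ∀ j, P[(fun ω => PU U (z ω) j) |
      MeasurableSpace.comap (fun ω => (y ω, PUperp U (z ω))) inferInstance] =ᵐ[P] 0 := by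
  refine ⟨fun hard j => ?_, isHardFrame_of_condExp_eq_zero hU hz hzint hy hξ hind⟩
  rw [condExp_comap_ae_eq_zero_iff (measurable_pair_PUperp hz hy U)
    (integrable_PU_apply hzint U j)]
  exact fun t ht => hard.setIntegral_eq_zero hz hzint hy ht j

theorem IsHardFrame.exists_colSpanR_eq_sup {k₁ k₂ : ℕ} {U₁ : Matrix (Fin k) (Fin k₁) ℝ}
    {U₂ : Matrix (Fin k) (Fin k₂) ℝ} (h₁ : IsHardFrame Ω P z y ξ U₁)
    (h₂ : IsHardFrame Ω P z y ξ U₂) (hz : Measurable z) (hzint : Integrable z P)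
    (hy : Measurable y) (hξ : Measurable ξ) (hind : IndepFun (fun ω => (y ω, z ω)) ξ P) :
    ∃ (k₃ : ℕ) (U₃ : Matrix (Fin k) (Fin k₃) ℝ),
      IsHardFrame Ω P z y ξ U₃ ∧ colSpanR U₃ = colSpanR U₁ ⊔ colSpanR U₂ := by
  obtain ⟨k₃, U₃, hU₃, hspan⟩ := exists_orthonormal_colSpanR_eq (colSpanR U₁ ⊔ colSpanR U₂)
  refine ⟨k₃, U₃, (isHardFrame_iff_condExp_eq_zero hU₃ hz hzint hy hξ hind).mpr fun j => ?_,
    hspan⟩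
  rw [condExp_comap_ae_eq_zero_iff (measurable_pair_PUperp hz hy U₃)
    (integrable_PU_apply hzint U₃ j)]
  intro t ht
  obtain ⟨a, b, hab⟩ := exists_PU_apply_eq_add h₁.1 h₂.1 hspan.le j
  have hint : ∀ {k' : ℕ} (U : Matrix (Fin k) (Fin k') ℝ) (i : Fin k),
      IntegrableOn (fun ω => PU U (z ω) i) ((fun ω => (y ω, PUperp U₃ (z ω))) ⁻¹' t) P :=
    fun U i => (integrable_PU_apply hzint U i).integrableOn
  have hvanish : ∀ {k' : ℕ} (U : Matrix (Fin k) (Fin k') ℝ), IsHardFrame Ω P z y ξ U →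
      colSpanR U ≤ colSpanR U₃ → (fun i => ∫ ω in (fun ω => (y ω, PUperp U₃ (z ω))) ⁻¹' t,
        PU U (z ω) i ∂P) = 0 :=
    fun U hU hle => funext fun i => hU.setIntegral_eq_zero_of_le hU₃ hle hz hzint hy ht i
  simp_rw [hab]
  rw [integral_add (integrable_dotProduct (hint U₁) a) (integrable_dotProduct (hint U₂) b),
    integral_dotProduct (hint U₁), integral_dotProduct (hint U₂),
    hvanish U₁ h₁ (hspan ▸ le_sup_left), hvanish U₂ h₂ (hspan ▸ le_sup_right),
    dotProduct_zero, dotProduct_zero, add_zero]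

end HardFrame

theorem stmt18_general (k : ℕ)
    (Ω : Type*) [MeasurableSpace Ω] (P : Measure Ω) [IsProbabilityMeasure P]
    (z : Ω → Fin k → ℝ) (ε ξ : Ω → ℝ) (h : (Fin k → ℝ) → ℝ → ℝ)
    (hzme : Measurable z) (hεme : Measurable ε) (hξme : Measurable ξ)
    (hhme : Measurable fun p : (Fin k → ℝ) × ℝ => h p.1 p.2)
    (hz : Measure.map z P = Measure.pi fun _ : Fin k => gaussianReal 0 1)
    (hind2 : IndepFun (fun ω => (z ω, ε ω)) ξ P) :
    let y : Ω → ℝ := fun ω => h (z ω) (ε ω)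
    (∀ (k' : ℕ) (U : Matrix (Fin k) (Fin k') ℝ), Uᵀ * U = 1 →
      (IsHardFrame Ω P z y ξ U ↔
        ∀ j, P[(fun ω => PU U (z ω) j) |
            MeasurableSpace.comap (fun ω => (y ω, PUperp U (z ω))) inferInstance]
          =ᵐ[P] 0)) ∧
    (∀ (k₁ k₂ : ℕ) (U₁ : Matrix (Fin k) (Fin k₁) ℝ) (U₂ : Matrix (Fin k) (Fin k₂) ℝ),
      IsHardFrame Ω P z y ξ U₁ → IsHardFrame Ω P z y ξ U₂ →
      ∃ (k₃ : ℕ) (U₃ : Matrix (Fin k) (Fin k₃) ℝ),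
        IsHardFrame Ω P z y ξ U₃ ∧ colSpanR U₃ = colSpanR U₁ ⊔ colSpanR U₂) ∧
    (∃! V : Submodule ℝ (Fin k → ℝ),
      (∃ (k' : ℕ) (U : Matrix (Fin k) (Fin k') ℝ),
        IsHardFrame Ω P z y ξ U ∧ colSpanR U = V) ∧
      ∀ (k' : ℕ) (U : Matrix (Fin k) (Fin k') ℝ),
        IsHardFrame Ω P z y ξ U → colSpanR U ≤ V) := by
  intro y
  have hy : Measurable y := hhme.comp (hzme.prodMk hεme)
  have hzint : Integrable z P :=
    integrable_of_map_eq_pi hzme hz fun _ => IsGaussian.integrable_id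
  have hind : IndepFun (fun ω => (y ω, z ω)) ξ P :=
    hind2.comp (hhme.prodMk measurable_fst) measurable_id
  have hsup : SupClosed {V | ∃ (k' : ℕ) (U : Matrix (Fin k) (Fin k') ℝ),
      IsHardFrame Ω P z y ξ U ∧ colSpanR U = V} := by
    rintro _ ⟨k₁, U₁, h₁, rfl⟩ _ ⟨k₂, U₂, h₂, rfl⟩
    exact h₁.exists_colSpanR_eq_sup h₂ hzme hzint hy hξme hind
  refine ⟨fun k' U hU => isHardFrame_iff_condExp_eq_zero hU hzme hzint hy hξme hind,
    fun _ _ _ _ h₁ h₂ => h₁.exists_colSpanR_eq_sup h₂ hzme hzint hy hξme hind, ?_⟩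
  obtain ⟨V, hV⟩ := hsup.exists_isGreatest ⟨⊥, 0, 0, isHardFrame_empty z y ξ, colSpanR_empty⟩
  refine ⟨V, ⟨hV.1, fun k' U hU => hV.2 ⟨k', U, hU, rfl⟩⟩, fun W hW => ?_⟩
  refine IsGreatest.unique ⟨hW.1, ?_⟩ hV
  rintro _ ⟨k', U, hU, rfl⟩
  exact hW.2 k' U hU

/-- Properties of hard orthonormal sets for a multi-index model
`y = h(z, ε)` with `z ∼ N(0, I_k)`:
(i) `U` is hard iff `E[P_U z | y, P_U^⊥ z] = 0` a.s.;
(ii) the span of two hard sets is spanned by a hard set;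
consequently there is a unique maximal hard subspace. -/
theorem stmt18 (k : ℕ)
    (Ω : Type*) [MeasurableSpace Ω] (P : Measure Ω) [IsProbabilityMeasure P]
    (z : Ω → Fin k → ℝ) (ε ξ : Ω → ℝ) (h : (Fin k → ℝ) → ℝ → ℝ)
    (hzme : Measurable z) (hεme : Measurable ε) (hξme : Measurable ξ)
    (hhme : Measurable fun p : (Fin k → ℝ) × ℝ => h p.1 p.2)
    (hz : Measure.map z P = Measure.pi fun _ : Fin k => gaussianReal 0 1)
    (hε : Measure.map ε P = gaussianReal 0 1)
    (hξ : Measure.map ξ P = gaussianReal 0 1)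
    (hind1 : IndepFun z ε P)
    (hind2 : IndepFun (fun ω => (z ω, ε ω)) ξ P) :
    let y : Ω → ℝ := fun ω => h (z ω) (ε ω)
    (∀ (k' : ℕ) (U : Matrix (Fin k) (Fin k') ℝ), Uᵀ * U = 1 →
      (IsHardFrame Ω P z y ξ U ↔
        ∀ j, P[(fun ω => PU U (z ω) j) |
            MeasurableSpace.comap (fun ω => (y ω, PUperp U (z ω))) inferInstance]
          =ᵐ[P] 0)) ∧
    (∀ (k₁ k₂ : ℕ) (U₁ : Matrix (Fin k) (Fin k₁) ℝ) (U₂ : Matrix (Fin k) (Fin k₂) ℝ),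
      IsHardFrame Ω P z y ξ U₁ → IsHardFrame Ω P z y ξ U₂ →
      ∃ (k₃ : ℕ) (U₃ : Matrix (Fin k) (Fin k₃) ℝ),
        IsHardFrame Ω P z y ξ U₃ ∧ colSpanR U₃ = colSpanR U₁ ⊔ colSpanR U₂) ∧
    (∃! V : Submodule ℝ (Fin k → ℝ),
      (∃ (k' : ℕ) (U : Matrix (Fin k) (Fin k') ℝ),
        IsHardFrame Ω P z y ξ U ∧ colSpanR U = V) ∧
      ∀ (k' : ℕ) (U : Matrix (Fin k) (Fin k') ℝ),
        IsHardFrame Ω P z y ξ U → colSpanR U ≤ V) :=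
  stmt18_general k Ω P z ε ξ h hzme hεme hξme hhme hz hind2
end
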